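/- arXiv:1703.10500 — 5 statements merged into one kernel-verified Lean document; each statement's English description precedes it below -/
import Mathlib

section
/- Let R be a region with variable set V_R indexed by a finite set S of vertices, and let (φ_i)_{i∈S} satisfy φ_i ≥ 0 and ∑_{i∈S} φ_i < 1. Define the clique belief b_R on {0,1}^S by b_R(x) = 1 − ∑_{i∈S} φ_i if x = 0, b_R(x) = φ_i if x = e_i (the i-th standard basis vector), and b_R(x) = 0 otherwise. Then b_R is a probability distribution on {0,1}^S, and its marginal on any subset S' ⊆ S is the clique belief on S' with the same parameters (φ_i)_{i∈S'}. -/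
open Finset

/-- The clique belief on `{0,1}^ι` with parameters `φ`: mass `1 - ∑ φ_i` on the all-zero
vector, mass `φ_i` on the `i`-th standard basis vector, and zero elsewhere. -/
def cliqueBelief {ι : Type*} [Fintype ι] [DecidableEq ι] (φ : ι → ℝ) (x : ι → Bool) : ℝ :=
  if (Finset.univ.filter (fun i => x i = true)).card = 0 then 1 - ∑ i, φ i
  else if (Finset.univ.filter (fun i => x i = true)).card = 1 then
    ∑ i ∈ Finset.univ.filter (fun i => x i = true), φ i
  else 0

/-! A clique belief is the signed combination `(1 - ∑ φ_i) δ_0 + ∑ φ_i δ_{e_i}` of point masses.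
Its total mass is therefore `1`, and summing out the `κ`-coordinates sends `δ_0` and every
`δ_{e_j}` with `j ∈ κ` to `δ_0`, and `δ_{e_i}` with `i ∈ ι` to `δ_{e_i}`: the masses `φ_j`,
`j ∈ κ`, are absorbed into the mass of the zero vector. -/

section BoolBasis

variable {ι κ : Type*} [DecidableEq ι]

def boolBasis (i : ι) : ι → Bool := fun j => decide (j = i)

@[simp]
theorem boolBasis_ne_bot (i : ι) : boolBasis i ≠ ⊥ :=
  fun h => by simpa [boolBasis] using congrFun h i

theorem boolBasis_inl [DecidableEq κ] (i : ι) :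
    boolBasis (Sum.inl i : ι ⊕ κ) = Sum.elim (boolBasis i) ⊥ := by
  ext (j | j) <;> simp [boolBasis]

theorem boolBasis_inr [DecidableEq κ] (j : κ) :
    boolBasis (Sum.inr j : ι ⊕ κ) = Sum.elim ⊥ (boolBasis j) := by
  ext (k | k) <;> simp [boolBasis]

end BoolBasis

theorem Bool.funext_iff_filter_true_eq {ι : Type*} [Fintype ι] {x x' : ι → Bool} :
    x = x' ↔ univ.filter (fun i => x i = true) = univ.filter (fun i => x' i = true) := by
  refine ⟨fun h => h ▸ rfl, fun h => funext fun i => ?_⟩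
  simpa using congrArg (i ∈ ·) h

section CliqueBelief

variable {ι κ : Type*} [Fintype ι] [DecidableEq ι]

theorem cliqueBelief_eq_ite_add_sum (φ : ι → ℝ) (x : ι → Bool) :
    cliqueBelief φ x =
      (if x = ⊥ then 1 - ∑ i, φ i else 0) + ∑ i, if x = boolBasis i then φ i else 0 := by
  have filter_bot : univ.filter (fun i => (⊥ : ι → Bool) i = true) = ∅ := by ext; simp
  have filter_boolBasis (i : ι) : univ.filter (fun j => boolBasis i j = true) = {i} := by
    ext; simp [boolBasis]
  simp only [Bool.funext_iff_filter_true_eq (x' := ⊥), filter_bot, cliqueBelief,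
    Bool.funext_iff_filter_true_eq (x' := boolBasis _), filter_boolBasis]
  generalize univ.filter (fun i => x i = true) = s
  rcases s.eq_empty_or_nonempty with rfl | hs
  · simp
  obtain hs1 | hs1 := eq_or_ne s.card 1
  · obtain ⟨i, rfl⟩ := card_eq_one.mp hs1
    simp
  · have : ∀ i, s ≠ {i} := fun i h => hs1 (by simp [h])
    simp [hs.ne_empty, hs.card_ne_zero, hs1, this]

theorem cliqueBelief_nonneg {φ : ι → ℝ} (hφ : ∀ i, 0 ≤ φ i) (hsum : ∑ i, φ i ≤ 1)
    (x : ι → Bool) : 0 ≤ cliqueBelief φ x := by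
  unfold cliqueBelief
  split_ifs
  · linarith
  · exact sum_nonneg fun i _ => hφ i
  · rfl

theorem sum_cliqueBelief (φ : ι → ℝ) : ∑ x, cliqueBelief φ x = 1 := by
  simp only [cliqueBelief_eq_ite_add_sum, sum_add_distrib, sum_ite_eq', mem_univ, if_true]
  rw [sum_comm]
  simp

theorem sum_cliqueBelief_sumElim [Fintype κ] [DecidableEq κ] (φ : ι ⊕ κ → ℝ) (y : ι → Bool) :
    ∑ z, cliqueBelief φ (Sum.elim y z) = cliqueBelief (φ ∘ Sum.inl) y := by
  have bot_eq : (⊥ : ι ⊕ κ → Bool) = Sum.elim ⊥ ⊥ := by ext (i | j) <;> rfl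
  simp only [cliqueBelief_eq_ite_add_sum, Fintype.sum_sum_type, boolBasis_inl, boolBasis_inr,
    bot_eq, Sum.elim_eq_iff, Function.comp_apply]
  by_cases hy : y = ⊥
  · simp only [hy, true_and, (boolBasis_ne_bot _).symm, false_and, if_false, sum_const_zero,
      zero_add, sum_add_distrib, sum_ite_eq', mem_univ, if_true, add_zero]
    rw [sum_comm]
    simp only [sum_ite_eq', mem_univ, if_true]
    ring
  · simp only [hy, false_and, if_false, ite_and, sum_const_zero, add_zero, zero_add]
    rw [sum_comm]
    simp

end CliqueBelief

/-- Clique beliefs are probability distributions, and the marginal of a clique belief on a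
subset of the coordinates (here: the `ι`-coordinates of `ι ⊕ κ`) is again a clique belief
with the same parameters. -/
theorem cliqueBelief_prob_and_marginal {ι κ : Type*} [Fintype ι] [Fintype κ]
    [DecidableEq ι] [DecidableEq κ] (φ : ι ⊕ κ → ℝ)
    (hpos : ∀ i, 0 ≤ φ i) (hsum : ∑ i, φ i < 1) :
    (∀ x : ι ⊕ κ → Bool, 0 ≤ cliqueBelief φ x) ∧
      (∑ x : ι ⊕ κ → Bool, cliqueBelief φ x = 1) ∧
      (∀ y : ι → Bool,
        ∑ z : κ → Bool, cliqueBelief φ (Sum.elim y z) = cliqueBelief (φ ∘ Sum.inl) y) :=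
  ⟨cliqueBelief_nonneg hpos hsum.le, sum_cliqueBelief φ, sum_cliqueBelief_sumElim φ⟩
end

section
/- Let G be a chordal graph with clique tree T = (K_G, E_T), where K_G is the set of maximal cliques. Suppose (φ_i)_{i∈V} satisfies φ_i > 0 and ∑_{i∈K} φ_i < 1 for every maximal clique K. Define F(φ) = −∑_i φ_i ln ν_i + ∑_i φ_i ln φ_i − ∑_{(K,K')∈E_T} (1−∑_{s∈K∩K'} φ_s) ln(1−∑_{s∈K∩K'} φ_s) + ∑_{K∈K_G} (1−∑_{s∈K} φ_s) ln(1−∑_{s∈K} φ_s). Then ∂F/∂φ_i = 0 for all i if and only if ν_i = φ_i · [∏_{(K,K')∈E_T: i∈K∩K'} (1−∑_{s∈K∩K'} φ_s)] / [∏_{K∈K_G: i∈K} (1−∑_{s∈K} φ_s)] for all i. -/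
/-!
Differentiating `chordalF` in `φ i` gives
`log φ i - log ν i + 1 + ∑_{S ∋ i} (log (1 - φ(S)) + 1) - ∑_{K ∋ i} (log (1 - φ(K)) + 1)`,
with `S` ranging over the separators of the clique-tree edges and `K` over the maximal cliques.
The cliques containing `i` span a subtree of `T` whose edges are exactly the tree edges with
`i ∈ S`, so there is one more such clique than such edge and the constants `1` cancel.  What is
left is `log (φ i ∏_S (1 - φ(S)) / ∏_K (1 - φ(K))) - log ν i`, which vanishes iff `ν i` equals
the product formula, log being injective on positive reals.
-/

open Finset

variable {V : Type*} [Fintype V] [DecidableEq V]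

/-- The separator `K ∩ K'` associated with an unordered pair of cliques. -/
def sep {KG : Finset (Finset V)} (e : Sym2 {K // K ∈ KG}) : Finset V :=
  Sym2.lift ⟨fun a b => a.val ∩ b.val, fun a b => Finset.inter_comm _ _⟩ e

/-- The chordal region-based free energy under clique belief: counting number `+1` on
maximal cliques, `-1` on clique-tree edge separators. -/
noncomputable def chordalF (ν : V → ℝ) (KG : Finset (Finset V))
    (T : SimpleGraph {K // K ∈ KG}) [DecidableRel T.Adj] (φ : V → ℝ) : ℝ :=
  -∑ i, φ i * Real.log (ν i) + ∑ i, φ i * Real.log (φ i)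
    - ∑ e ∈ T.edgeFinset, (1 - ∑ s ∈ sep e, φ s) * Real.log (1 - ∑ s ∈ sep e, φ s)
    + ∑ K ∈ KG, (1 - ∑ s ∈ K, φ s) * Real.log (1 - ∑ s ∈ K, φ s)

theorem hasDerivAt_sum_apply_update {ι : Type*} [Fintype ι] [DecidableEq ι]
    (g : ι → ℝ → ℝ) (φ : ι → ℝ) (i : ι) {g' : ℝ} (hg : HasDerivAt (g i) g' (φ i)) :
    HasDerivAt (fun t => ∑ j, g j (Function.update φ i t j)) g' (φ i) := by
  have heq : (fun t => ∑ j, g j (Function.update φ i t j))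
      = fun t => g i t + ∑ j ∈ univ \ {i}, g j (φ j) := by
    funext t
    simp_rw [Function.apply_update g, sum_update_of_mem (mem_univ i)]
  rw [heq]
  exact hg.add_const _

theorem hasDerivAt_sum_update {ι : Type*} [DecidableEq ι] (φ : ι → ℝ) (i : ι) (A : Finset ι)
    (t₀ : ℝ) :
    HasDerivAt (fun t => ∑ s ∈ A, Function.update φ i t s) (if i ∈ A then 1 else 0) t₀ := by
  by_cases h : i ∈ A
  · simp_rw [sum_update_of_mem h, if_pos h]
    exact (hasDerivAt_id t₀).add_const _
  · simp_rw [sum_update_of_notMem h, if_neg h]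
    exact hasDerivAt_const _ _

theorem hasDerivAt_one_sub_mul_log {x : ℝ} (hx : x < 1) :
    HasDerivAt (fun y => (1 - y) * Real.log (1 - y)) (-(Real.log (1 - x) + 1)) x := by
  refine ((Real.hasDerivAt_mul_log (sub_pos.2 hx).ne').comp x
    ((hasDerivAt_id x).const_sub 1)).congr_deriv ?_
  ring

theorem hasDerivAt_one_sub_sum_mul_log_update {ι : Type*} [DecidableEq ι] (φ : ι → ℝ) (i : ι)
    {A : Finset ι} (hA : ∑ s ∈ A, φ s < 1) :
    HasDerivAt (fun t => (1 - ∑ s ∈ A, Function.update φ i t s) *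
        Real.log (1 - ∑ s ∈ A, Function.update φ i t s))
      (-if i ∈ A then Real.log (1 - ∑ s ∈ A, φ s) + 1 else 0) (φ i) := by
  refine ((hasDerivAt_one_sub_mul_log hA).comp_of_eq (φ i) (hasDerivAt_sum_update φ i A (φ i))
    (by rw [Function.update_eq_self])).congr_deriv ?_
  split_ifs <;> ring

theorem sum_sep_lt_one {α : Type*} [DecidableEq α] {KG : Finset (Finset α)} {φ : α → ℝ}
    (hφ : ∀ j, 0 ≤ φ j) (hcl : ∀ K ∈ KG, ∑ s ∈ K, φ s < 1) (e : Sym2 {K // K ∈ KG}) :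
    ∑ s ∈ sep e, φ s < 1 := by
  induction e using Sym2.ind with
  | _ a b =>
    calc ∑ s ∈ sep s(a, b), φ s ≤ ∑ s ∈ a.val, φ s :=
          sum_le_sum_of_subset_of_nonneg inter_subset_left fun j _ _ => hφ j
      _ < 1 := hcl a.val a.property

theorem hasDerivAt_chordalF_update (ν : V → ℝ) (KG : Finset (Finset V))
    (T : SimpleGraph {K // K ∈ KG}) [DecidableRel T.Adj] (φ : V → ℝ) (i : V)
    (hφi : φ i ≠ 0) (hφ : ∀ j, 0 ≤ φ j) (hcl : ∀ K ∈ KG, ∑ s ∈ K, φ s < 1) :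
    HasDerivAt (fun t => chordalF ν KG T (Function.update φ i t))
      (-Real.log (ν i) + (Real.log (φ i) + 1)
        + ∑ e ∈ T.edgeFinset with i ∈ sep e, (Real.log (1 - ∑ s ∈ sep e, φ s) + 1)
        - ∑ K ∈ KG with i ∈ K, (Real.log (1 - ∑ s ∈ K, φ s) + 1)) (φ i) := by
  have hlin := hasDerivAt_sum_apply_update (fun j x => x * Real.log (ν j)) φ i
    (hasDerivAt_mul_const _)
  have hent := hasDerivAt_sum_apply_update (fun _ x => x * Real.log x) φ i
    (Real.hasDerivAt_mul_log hφi)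
  have hsep := HasDerivAt.fun_sum (u := T.edgeFinset) fun e _ =>
    hasDerivAt_one_sub_sum_mul_log_update φ i (sum_sep_lt_one hφ hcl e)
  have hclq := HasDerivAt.fun_sum (u := KG) fun K hK =>
    hasDerivAt_one_sub_sum_mul_log_update φ i (hcl K hK)
  refine (((hlin.neg.add hent).sub hsep).add hclq).congr_deriv ?_
  simp only [sum_neg_distrib, sum_filter]
  ring

theorem SimpleGraph.IsTree.card_eq_card_filter_edgeFinset_add_one {W : Type*} [Fintype W]
    [DecidableEq W] {T : SimpleGraph W} [DecidableRel T.Adj] (hT : T.IsTree) (s : Finset W)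
    (hs : (T.induce (s : Set W)).Connected) :
    #s = #{e ∈ T.edgeFinset | e.toFinset ⊆ s} + 1 := by
  have htree : (T.induce (s : Set W)).IsTree := ⟨hs, hT.isAcyclic.induce _⟩
  rw [card_filter_edgeFinset_toFinset_subset, htree.card_edgeFinset]
  simp

theorem card_filter_mem_eq_card_filter_mem_sep_add_one {α : Type*} [DecidableEq α]
    {KG : Finset (Finset α)} {T : SimpleGraph {K // K ∈ KG}} [DecidableRel T.Adj]
    (hT : T.IsTree) (i : α) (hsub : (T.induce {K : {K // K ∈ KG} | i ∈ K.val}).Connected) :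
    #{K ∈ KG | i ∈ K} = #{e ∈ T.edgeFinset | i ∈ sep e} + 1 := by
  have key := hT.card_eq_card_filter_edgeFinset_add_one {K | i ∈ K.val}
    (by rwa [coe_filter_univ])
  have hedge : ∀ e : Sym2 {K // K ∈ KG},
      e.toFinset ⊆ ({K | i ∈ K.val} : Finset {K // K ∈ KG}) ↔ i ∈ sep e := by
    refine Sym2.ind fun a b => ?_
    simp [sep, subset_iff]
  rw [← filter_congr fun e _ => hedge e, ← key, univ_eq_attach,
    filter_attach (fun K => i ∈ K), card_map, card_attach]

theorem chordal_zero_gradient_iff_general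
    (KG : Finset (Finset V))
    (T : SimpleGraph {K // K ∈ KG}) [DecidableRel T.Adj] (hT : T.IsTree)
    (hsub : ∀ v : V, (T.induce {K : {K // K ∈ KG} | v ∈ K.val}).Connected)
    (ν φ : V → ℝ) (hν : ∀ i, 0 < ν i) (hφ : ∀ i, 0 < φ i)
    (hcl : ∀ K ∈ KG, ∑ s ∈ K, φ s < 1) :
    (∀ i, HasDerivAt (fun t => chordalF ν KG T (Function.update φ i t)) 0 (φ i)) ↔
      ∀ i, ν i = φ i *
        (∏ e ∈ T.edgeFinset.filter (fun e => i ∈ sep e), (1 - ∑ s ∈ sep e, φ s)) /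
        ∏ K ∈ KG.filter (fun K => i ∈ K), (1 - ∑ s ∈ K, φ s) := by
  refine forall_congr' fun i => ?_
  have hφ0 : ∀ j, 0 ≤ φ j := fun j => (hφ j).le
  have hd := hasDerivAt_chordalF_update ν KG T φ i (hφ i).ne' hφ0 hcl
  have hcard : (#{K ∈ KG | i ∈ K} : ℝ) = #{e ∈ T.edgeFinset | i ∈ sep e} + 1 := by
    exact_mod_cast card_filter_mem_eq_card_filter_mem_sep_add_one hT i (hsub i)
  have hsep_pos : ∀ e ∈ T.edgeFinset.filter (fun e => i ∈ sep e), 0 < 1 - ∑ s ∈ sep e, φ s :=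
    fun e _ => sub_pos.2 (sum_sep_lt_one hφ0 hcl e)
  have hclq_pos : ∀ K ∈ KG.filter (fun K => i ∈ K), 0 < 1 - ∑ s ∈ K, φ s :=
    fun K hK => sub_pos.2 (hcl K (mem_filter.1 hK).1)
  have hnum := mul_pos (hφ i) (prod_pos hsep_pos)
  have hden := prod_pos hclq_pos
  rw [← Real.log_injOn_pos.eq_iff (hν i) (div_pos hnum hden), Real.log_div hnum.ne' hden.ne',
    Real.log_mul (hφ i).ne' (prod_pos hsep_pos).ne', Real.log_prod fun e he => (hsep_pos e he).ne',
    Real.log_prod fun K hK => (hclq_pos K hK).ne']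
  simp only [sum_add_distrib, sum_const, nsmul_eq_mul, mul_one] at hd
  exact ⟨fun h => by linarith [hd.unique h], fun h => by convert hd using 1; linarith⟩

/-- The gradient of the chordal free energy vanishes at `φ` iff the back-off rates are
given by the exact chordal formula. -/
theorem chordal_zero_gradient_iff (G : SimpleGraph V) [DecidableRel G.Adj]
    (KG : Finset (Finset V))
    (hKG : ∀ K : Finset V, K ∈ KG ↔ (G.IsClique (K : Set V) ∧
      ∀ K' : Finset V, G.IsClique (K' : Set V) → K ⊆ K' → K' = K))
    (T : SimpleGraph {K // K ∈ KG}) [DecidableRel T.Adj] (hT : T.IsTree)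
    (hsub : ∀ v : V, (T.induce {K : {K // K ∈ KG} | v ∈ K.val}).Connected)
    (ν φ : V → ℝ) (hν : ∀ i, 0 < ν i) (hφ : ∀ i, 0 < φ i)
    (hcl : ∀ K ∈ KG, ∑ s ∈ K, φ s < 1) :
    (∀ i, HasDerivAt (fun t => chordalF ν KG T (Function.update φ i t)) 0 (φ i)) ↔
      ∀ i, ν i = φ i *
        (∏ e ∈ T.edgeFinset.filter (fun e => i ∈ sep e), (1 - ∑ s ∈ sep e, φ s)) /
        ∏ K ∈ KG.filter (fun K => i ∈ K), (1 - ∑ s ∈ K, φ s) :=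
  chordal_zero_gradient_iff_general KG T hT hsub ν φ hν hφ hcl
end

section
/- Let G be a chordal graph with clique tree T = (K_G, E_T) and let p be the CSMA product-form distribution on independent-set vectors with throughputs p_i(1). Then the normalizing constant satisfies Z = [∏_{(K,K')∈E_T} (1 − ∑_{s∈K∩K'} p_s(1))] / [∏_{K∈K_G} (1 − ∑_{s∈K} p_s(1))], assuming the junction-tree factorization p(x) = ∏_{K∈K_G} p_K(x_K) / ∏_{(K,K')∈E_T} p_{K∩K'}(x_{K∩K'}) holds, where p_S denotes the marginal of p on coordinates S. -/
open Finset

variable {V : Type*} [Fintype V] [DecidableEq V]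

/-- Unnormalized CSMA weight of a state. -/
noncomputable def csmaWeight (G : SimpleGraph V) [DecidableRel G.Adj] (ν : V → ℝ)
    (x : V → Bool) : ℝ :=
  (∏ i, if x i then ν i else 1) *
    ∏ e ∈ G.edgeFinset, (if ∀ v ∈ e, x v = true then (0 : ℝ) else 1)

/-- Normalizing constant `Z`. -/
noncomputable def csmaZ (G : SimpleGraph V) [DecidableRel G.Adj] (ν : V → ℝ) : ℝ :=
  ∑ x : V → Bool, csmaWeight G ν x

/-- The CSMA product-form distribution. -/
noncomputable def csmaP (G : SimpleGraph V) [DecidableRel G.Adj] (ν : V → ℝ)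
    (x : V → Bool) : ℝ :=
  csmaWeight G ν x / csmaZ G ν

/-- Marginal of `p` on the coordinates in `S`, evaluated at `y`. -/
noncomputable def csmaMarg (G : SimpleGraph V) [DecidableRel G.Adj] (ν : V → ℝ)
    (S : Finset V) (y : V → Bool) : ℝ :=
  ∑ x ∈ Finset.univ.filter (fun x : V → Bool => ∀ i ∈ S, x i = y i), csmaP G ν x

/-- Throughput of link `i`: the marginal probability that `x i = 1`. -/
noncomputable def csmaOne (G : SimpleGraph V) [DecidableRel G.Adj] (ν : V → ℝ)
    (i : V) : ℝ :=
  csmaMarg G ν {i} (fun _ => true)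

/-- `x` is the indicator vector of an independent set of `G`. -/
def IsIndep (G : SimpleGraph V) (x : V → Bool) : Prop :=
  ∀ i j, G.Adj i j → ¬(x i = true ∧ x j = true)

-- auxiliary lemmas
lemma csmaWeight_nonneg (G : SimpleGraph V) [DecidableRel G.Adj] (ν : V → ℝ)
    (hν : ∀ i, 0 < ν i) (x : V → Bool) : 0 ≤ csmaWeight G ν x := by
  unfold csmaWeight
  apply mul_nonneg
  · exact Finset.prod_nonneg fun i _ => by split <;> [exact (hν i).le; norm_num]
  · exact Finset.prod_nonneg fun e _ => by split <;> norm_num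

lemma csmaWeight_false (G : SimpleGraph V) [DecidableRel G.Adj] (ν : V → ℝ) :
    csmaWeight G ν (fun _ => false) = 1 := by
  unfold csmaWeight
  have h1 : (∏ i, if (fun _ => false : V → Bool) i then ν i else 1) = 1 := by simp
  have h2 : (∏ e ∈ G.edgeFinset,
      (if ∀ v ∈ e, (fun _ => false : V → Bool) v = true then (0:ℝ) else 1)) = 1 := by
    apply Finset.prod_eq_one
    intro e _
    have hn : ¬ ∀ v ∈ e, (fun _ => false : V → Bool) v = true := fun h => by
      simpa using h e.out.1 (Sym2.out_fst_mem e)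
    rw [if_neg hn]
  rw [h1, h2, mul_one]

lemma csmaZ_pos (G : SimpleGraph V) [DecidableRel G.Adj] (ν : V → ℝ)
    (hν : ∀ i, 0 < ν i) : 0 < csmaZ G ν := by
  unfold csmaZ
  have h1 : csmaWeight G ν (fun _ => false) = 1 := csmaWeight_false G ν
  calc (0:ℝ) < 1 := one_pos
    _ = csmaWeight G ν (fun _ => false) := h1.symm
    _ ≤ ∑ x : V → Bool, csmaWeight G ν x :=
      Finset.single_le_sum (fun x _ => csmaWeight_nonneg G ν hν x) (Finset.mem_univ _)

lemma csmaP_nonneg (G : SimpleGraph V) [DecidableRel G.Adj] (ν : V → ℝ)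
    (hν : ∀ i, 0 < ν i) (x : V → Bool) : 0 ≤ csmaP G ν x :=
  div_nonneg (csmaWeight_nonneg G ν hν x) (csmaZ_pos G ν hν).le

lemma csmaP_false (G : SimpleGraph V) [DecidableRel G.Adj] (ν : V → ℝ) :
    csmaP G ν (fun _ => false) = 1 / csmaZ G ν := by
  unfold csmaP; rw [csmaWeight_false]

lemma csmaP_eq_zero (G : SimpleGraph V) [DecidableRel G.Adj] (ν : V → ℝ)
    {x : V → Bool} (hx : ¬ IsIndep G x) : csmaP G ν x = 0 := by
  unfold IsIndep at hx
  push_neg at hx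
  obtain ⟨i, j, hij, hxi, hxj⟩ := hx
  unfold csmaP csmaWeight
  have hmem : s(i, j) ∈ G.edgeFinset := by
    rw [SimpleGraph.mem_edgeFinset]; exact hij
  have : (∏ e ∈ G.edgeFinset, (if ∀ v ∈ e, x v = true then (0 : ℝ) else 1)) = 0 := by
    apply Finset.prod_eq_zero hmem
    have : ∀ v ∈ s(i,j), x v = true := by
      intro v hv
      rw [Sym2.mem_iff] at hv
      rcases hv with rfl | rfl <;> assumption
    simp [this]
  rw [this, mul_zero, zero_div]

lemma csmaP_sum (G : SimpleGraph V) [DecidableRel G.Adj] (ν : V → ℝ)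
    (hν : ∀ i, 0 < ν i) : ∑ x : V → Bool, csmaP G ν x = 1 := by
  unfold csmaP
  rw [← Finset.sum_div]
  exact div_self (csmaZ_pos G ν hν).ne'

lemma csmaOne_eq (G : SimpleGraph V) [DecidableRel G.Adj] (ν : V → ℝ) (s : V) :
    csmaOne G ν s = ∑ x : V → Bool, if x s = true then csmaP G ν x else 0 := by
  unfold csmaOne csmaMarg
  rw [Finset.sum_filter]
  apply Finset.sum_congr rfl
  intro x _
  simp

lemma csmaMarg_clique_false (G : SimpleGraph V) [DecidableRel G.Adj] (ν : V → ℝ)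
    (hν : ∀ i, 0 < ν i) (S : Finset V) (hS : G.IsClique (S : Set V)) :
    csmaMarg G ν S (fun _ => false) = 1 - ∑ s ∈ S, csmaOne G ν s := by
  have key : csmaMarg G ν S (fun _ => false) + ∑ s ∈ S, csmaOne G ν s = 1 := by
    unfold csmaMarg
    rw [Finset.sum_filter]
    have h2 : ∑ s ∈ S, csmaOne G ν s
        = ∑ x : V → Bool, ∑ s ∈ S, (if x s = true then csmaP G ν x else 0) := by
      rw [Finset.sum_comm]
      exact Finset.sum_congr rfl fun s _ => csmaOne_eq G ν s
    rw [h2, ← Finset.sum_add_distrib, ← csmaP_sum G ν hν]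
    apply Finset.sum_congr rfl
    intro x _
    by_cases hp : csmaP G ν x = 0
    · simp [hp]
    · have hind : IsIndep G x := by
        by_contra h
        exact hp (csmaP_eq_zero G ν h)
      by_cases hA : ∀ i ∈ S, x i = (fun _ => false) i
      · rw [if_pos hA]
        have : ∑ s ∈ S, (if x s = true then csmaP G ν x else 0) = 0 := by
          apply Finset.sum_eq_zero
          intro s hs
          have := hA s hs
          simp only at this
          simp [this]
        rw [this, add_zero]
      · rw [if_neg hA, zero_add]
        push_neg at hA
        obtain ⟨i₀, hi₀S, hi₀⟩ := hA
        simp only [Bool.not_eq_false] at hi₀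
        rw [Finset.sum_eq_single i₀]
        · simp [hi₀]
        · intro s hs hne
          by_cases hxs : x s = true
          · exfalso
            have hadj : G.Adj s i₀ := hS hs hi₀S hne
            exact hind s i₀ hadj ⟨hxs, hi₀⟩
          · simp [hxs]
        · intro h; exact absurd hi₀S h
  linarith

lemma csmaMarg_false_pos (G : SimpleGraph V) [DecidableRel G.Adj] (ν : V → ℝ)
    (hν : ∀ i, 0 < ν i) (S : Finset V) :
    0 < csmaMarg G ν S (fun _ => false) := by
  unfold csmaMarg
  have hmem : (fun _ => false) ∈ Finset.univ.filter
      (fun x : V → Bool => ∀ i ∈ S, x i = (fun _ => false) i) := by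
    simp
  calc (0:ℝ) < 1 / csmaZ G ν := div_pos one_pos (csmaZ_pos G ν hν)
    _ = csmaP G ν (fun _ => false) := (csmaP_false G ν).symm
    _ ≤ _ := Finset.single_le_sum (fun x _ => csmaP_nonneg G ν hν x) hmem

/-- Junction-tree expression for the normalizing constant `Z` of the CSMA product-form
distribution on a chordal conflict graph. -/
theorem csmaZ_junction_tree (G : SimpleGraph V) [DecidableRel G.Adj]
    (KG : Finset (Finset V))
    (hKG : ∀ K : Finset V, K ∈ KG ↔ (G.IsClique (K : Set V) ∧
      ∀ K' : Finset V, G.IsClique (K' : Set V) → K ⊆ K' → K' = K))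
    (T : SimpleGraph {K // K ∈ KG}) [DecidableRel T.Adj] (hT : T.IsTree)
    (hsub : ∀ v : V, (T.induce {K : {K // K ∈ KG} | v ∈ K.val}).Connected)
    (ν : V → ℝ) (hν : ∀ i, 0 < ν i)
    (hfact : ∀ x : V → Bool, IsIndep G x →
      csmaP G ν x = (∏ K ∈ KG, csmaMarg G ν K x) /
        ∏ e ∈ T.edgeFinset, csmaMarg G ν (sep e) x) :
    csmaZ G ν = (∏ e ∈ T.edgeFinset, (1 - ∑ s ∈ sep e, csmaOne G ν s)) /
      ∏ K ∈ KG, (1 - ∑ s ∈ K, csmaOne G ν s) := by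
  have hZ := csmaZ_pos G ν hν
  have hindep0 : IsIndep G (fun _ => false) := by
    intro i j _ h
    simp at h
  have h0 := hfact (fun _ => false) hindep0
  rw [csmaP_false] at h0
  have hsepclique : ∀ e : Sym2 {K // K ∈ KG}, G.IsClique ((sep e : Finset V) : Set V) := by
    intro e
    induction e using Sym2.ind with
    | _ a b =>
      have hs : (sep (s(a,b)) : Finset V) = a.val ∩ b.val := rfl
      rw [hs]
      refine SimpleGraph.IsClique.subset ?_ ((hKG a.val).mp a.property).1
      rw [Finset.coe_inter]
      exact Set.inter_subset_left
  have hKmarg : ∀ K ∈ KG, csmaMarg G ν K (fun _ => false) = 1 - ∑ s ∈ K, csmaOne G ν s :=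
    fun K hK => csmaMarg_clique_false G ν hν K ((hKG K).mp hK).1
  have hEmarg : ∀ e ∈ T.edgeFinset,
      csmaMarg G ν (sep e) (fun _ => false) = 1 - ∑ s ∈ sep e, csmaOne G ν s :=
    fun e _ => csmaMarg_clique_false G ν hν (sep e) (hsepclique e)
  rw [Finset.prod_congr rfl hKmarg, Finset.prod_congr rfl hEmarg] at h0
  have hA : 0 < ∏ K ∈ KG, (1 - ∑ s ∈ K, csmaOne G ν s) := by
    apply Finset.prod_pos
    intro K hK
    rw [← hKmarg K hK]
    exact csmaMarg_false_pos G ν hν K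
  have hB : 0 < ∏ e ∈ T.edgeFinset, (1 - ∑ s ∈ sep e, csmaOne G ν s) := by
    apply Finset.prod_pos
    intro e he
    rw [← hEmarg e he]
    exact csmaMarg_false_pos G ν hν (sep e)
  rw [eq_div_iff hA.ne']
  rw [div_eq_div_iff hZ.ne' hB.ne'] at h0
  linarith
end

section
/- Let G be a finite graph with edge set E (it is not assumed that every edge of G lies in a triangle), and fix k_max ≥ 2. Define counting numbers c(K) = 1_{|K|>1} + ∑_{s=|K|+1}^{k_max} (−1)^{s−|K|} n_{K,s} for cliques K with 1 ≤ |K| ≤ k_max. Then for every edge e = {i,j} of G: ∑_{K clique: {i,j} ⊆ K, |K| ≤ k_max} c(K) = 1. -/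
open Finset

variable {V : Type*} [Fintype V] [DecidableEq V]

/-- `nKS G K s` is the number of size-`s` cliques of `G` containing `K`. -/
def nKS (G : SimpleGraph V) [DecidableRel G.Adj] (K : Finset V) (s : ℕ) : ℕ :=
  (Finset.univ.filter (fun K'' : Finset V => G.IsNClique s K'' ∧ K ⊆ K'')).card

/-- The explicit counting number of the clique `K` in the size `kmax` clique
approximation. -/
def cNum (G : SimpleGraph V) [DecidableRel G.Adj] (kmax : ℕ) (K : Finset V) : ℤ :=
  (if 1 < K.card then 1 else 0) +
    ∑ s ∈ Finset.Icc (K.card + 1) kmax, (-1 : ℤ) ^ (s - K.card) * (nKS G K s : ℤ)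

lemma aux_powerset_sum {α : Type*} [DecidableEq α] (M : Finset α) :
    ∑ T ∈ M.powerset.erase M, (-1 : ℤ) ^ (M.card - T.card)
      = (if M = ∅ then 1 else 0) - 1 := by
  have key : ∀ T ∈ M.powerset, (-1 : ℤ) ^ (M.card - T.card)
      = (-1 : ℤ) ^ M.card * (-1 : ℤ) ^ T.card := by
    intro T hT
    have hle : T.card ≤ M.card := Finset.card_le_card (Finset.mem_powerset.mp hT)
    rw [← pow_add]
    rw [neg_one_pow_eq_pow_mod_two, neg_one_pow_eq_pow_mod_two (n := M.card + T.card)]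
    congr 1
    omega
  have hfull : ∑ T ∈ M.powerset, (-1 : ℤ) ^ (M.card - T.card)
      = if M = ∅ then 1 else 0 := by
    rw [Finset.sum_congr rfl key, ← Finset.mul_sum,
      Finset.sum_powerset_neg_one_pow_card]
    by_cases h : M = ∅ <;> simp [h]
  have hMem : M ∈ M.powerset := Finset.mem_powerset_self M
  have := Finset.sum_erase_add M.powerset
    (fun T => (-1 : ℤ) ^ (M.card - T.card)) hMem
  rw [hfull] at this
  simp only [Nat.sub_self, pow_zero] at this
  split_ifs at this ⊢ <;> omega

/-- Validity of the counting numbers at an edge factor node: the counting numbers of all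
clique regions containing the edge `{i, j}` sum to one. -/
theorem counting_validity_edge (G : SimpleGraph V) [DecidableRel G.Adj]
    (kmax : ℕ) (hkmax : 2 ≤ kmax) (i j : V) (hij : G.Adj i j) :
    ∑ K ∈ Finset.univ.filter (fun K : Finset V =>
        G.IsClique (K : Set V) ∧ {i, j} ⊆ K ∧ K.card ≤ kmax), cNum G kmax K = 1 := by
  classical
  have hne : i ≠ j := hij.ne
  set S := Finset.univ.filter (fun K : Finset V =>
      G.IsClique (K : Set V) ∧ {i, j} ⊆ K ∧ K.card ≤ kmax) with hS
  have hmemS : ∀ {K : Finset V}, K ∈ S ↔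
      G.IsClique (K : Set V) ∧ {i, j} ⊆ K ∧ K.card ≤ kmax := by
    intro K; simp [hS]
  have hcard2 : ∀ K ∈ S, 2 ≤ K.card := by
    intro K hK
    have h := (hmemS.mp hK).2.1
    calc 2 = ({i, j} : Finset V).card := (Finset.card_pair hne).symm
      _ ≤ K.card := Finset.card_le_card h
  -- Step B : the alternating sum in cNum as a sum over strict superset cliques in S
  have hinner : ∀ K ∈ S,
      ∑ s ∈ Finset.Icc (K.card + 1) kmax, (-1 : ℤ) ^ (s - K.card) * (nKS G K s : ℤ)
        = ∑ K'' ∈ S.filter (fun K'' => K ⊆ K'' ∧ K ≠ K''),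
            (-1 : ℤ) ^ (K''.card - K.card) := by
    intro K hK
    obtain ⟨hKclique, hKij, hKle⟩ := hmemS.mp hK
    have hmaps : ∀ K'' ∈ S.filter (fun K'' => K ⊆ K'' ∧ K ≠ K''),
        K''.card ∈ Finset.Icc (K.card + 1) kmax := by
      intro K'' hK''
      rw [Finset.mem_filter] at hK''
      obtain ⟨hK''S, hsub, hne'⟩ := hK''
      have hlt : K.card < K''.card := Finset.card_lt_card ⟨hsub, fun h =>
        hne' (Finset.Subset.antisymm hsub h)⟩
      exact Finset.mem_Icc.mpr ⟨hlt, (hmemS.mp hK''S).2.2⟩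
    rw [← Finset.sum_fiberwise_of_maps_to hmaps]
    refine Finset.sum_congr rfl fun s hs => ?_
    have hs' := Finset.mem_Icc.mp hs
    have hfib : (S.filter (fun K'' => K ⊆ K'' ∧ K ≠ K'')).filter
          (fun K'' => K''.card = s)
        = Finset.univ.filter (fun K'' : Finset V => G.IsNClique s K'' ∧ K ⊆ K'') := by
      ext K''
      simp only [Finset.mem_filter, Finset.mem_univ, true_and, hmemS,
        SimpleGraph.isNClique_iff]
      constructor
      · rintro ⟨⟨⟨hc, _, _⟩, hsub, _⟩, hcard⟩
        exact ⟨⟨hc, hcard⟩, hsub⟩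
      · rintro ⟨⟨hc, hcard⟩, hsub⟩
        have hlt : K.card < K''.card := by omega
        refine ⟨⟨⟨hc, hKij.trans hsub, by omega⟩, hsub, fun h => ?_⟩, hcard⟩
        subst h; omega
    rw [Finset.sum_congr rfl (fun K'' hK'' => by
      rw [(Finset.mem_filter.mp hK'').2]), Finset.sum_const, hfib, nsmul_eq_mul,
      mul_comm, nKS]
  -- Step D : the inner sum after swapping
  have hD : ∀ K'' ∈ S,
      ∑ K ∈ S.filter (fun K => K ⊆ K'' ∧ K ≠ K''), (-1 : ℤ) ^ (K''.card - K.card)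
        = (if K'' = ({i, j} : Finset V) then 1 else 0) - 1 := by
    intro K'' hK''
    obtain ⟨hc'', hij'', hle''⟩ := hmemS.mp hK''
    set M := K'' \ {i, j} with hM
    have hdisj : Disjoint M ({i, j} : Finset V) := Finset.sdiff_disjoint
    have hbij : ∑ K ∈ S.filter (fun K => K ⊆ K'' ∧ K ≠ K''),
        (-1 : ℤ) ^ (K''.card - K.card)
        = ∑ T ∈ M.powerset.erase M, (-1 : ℤ) ^ (M.card - T.card) := by
      refine Finset.sum_nbij' (fun K => K \ {i, j}) (fun T => T ∪ {i, j})
        ?_ ?_ ?_ ?_ ?_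
      · intro K hK
        rw [Finset.mem_filter] at hK
        obtain ⟨hKS, hsub, hne'⟩ := hK
        obtain ⟨hKc, hKij, hKle⟩ := hmemS.mp hKS
        refine Finset.mem_erase.mpr ⟨fun h => hne' ?_, Finset.mem_powerset.mpr
          (Finset.sdiff_subset_sdiff hsub Finset.Subset.rfl)⟩
        have h1 : K \ {i, j} ∪ {i, j} = K := Finset.sdiff_union_of_subset hKij
        have h2 : K'' \ {i, j} ∪ {i, j} = K'' := Finset.sdiff_union_of_subset hij''
        rw [← h1, ← h2]
        exact congrArg (· ∪ {i, j}) h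
      · intro T hT
        rw [Finset.mem_erase, Finset.mem_powerset] at hT
        obtain ⟨hTne, hTM⟩ := hT
        have hdT : Disjoint T ({i, j} : Finset V) :=
          Finset.disjoint_of_subset_left hTM hdisj
        have hsub : T ∪ {i, j} ⊆ K'' :=
          Finset.union_subset (hTM.trans Finset.sdiff_subset) hij''
        rw [Finset.mem_filter]
        refine ⟨hmemS.mpr ⟨hc''.subset (by exact_mod_cast hsub), Finset.subset_union_right,
          le_trans (Finset.card_le_card hsub) hle''⟩, hsub, fun h => hTne ?_⟩
        have h' : T ∪ {i, j} = K'' := h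
        show T = K'' \ {i, j}
        rw [← h', Finset.union_sdiff_cancel_right hdT]
      · intro K hK
        rw [Finset.mem_filter] at hK
        exact Finset.sdiff_union_of_subset (hmemS.mp hK.1).2.1
      · intro T hT
        rw [Finset.mem_erase, Finset.mem_powerset] at hT
        exact Finset.union_sdiff_cancel_right
          (Finset.disjoint_of_subset_left hT.2 hdisj)
      · intro K hK
        rw [Finset.mem_filter] at hK
        obtain ⟨hKS, hsub, _⟩ := hK
        obtain ⟨_, hKij, _⟩ := hmemS.mp hKS
        show (-1 : ℤ) ^ (K''.card - K.card) = (-1 : ℤ) ^ (M.card - (K \ {i, j}).card)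
        congr 1
        have h1 : (K \ {i, j}).card = K.card - 2 := by
          rw [Finset.card_sdiff_of_subset hKij, Finset.card_pair hne]
        have h2 : M.card = K''.card - 2 := by
          rw [hM, Finset.card_sdiff_of_subset hij'', Finset.card_pair hne]
        have h3 : 2 ≤ K.card := hcard2 K hKS
        have h4 : K.card ≤ K''.card := Finset.card_le_card hsub
        omega
    rw [hbij, aux_powerset_sum]
    congr 1
    have : M = ∅ ↔ K'' = ({i, j} : Finset V) := by
      rw [hM, Finset.sdiff_eq_empty_iff_subset]
      exact ⟨fun h => Finset.Subset.antisymm h hij'', fun h => h ▸ Finset.Subset.rfl⟩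
    simp [this]
  -- assemble
  have hijS : ({i, j} : Finset V) ∈ S :=
    hmemS.mpr ⟨by simpa using SimpleGraph.isClique_pair.mpr (fun _ => hij),
      Finset.Subset.rfl, by rw [Finset.card_pair hne]; exact hkmax⟩
  calc ∑ K ∈ S, cNum G kmax K
      = ∑ K ∈ S, (1 + ∑ K'' ∈ S.filter (fun K'' => K ⊆ K'' ∧ K ≠ K''),
          (-1 : ℤ) ^ (K''.card - K.card)) := by
        refine Finset.sum_congr rfl fun K hK => ?_
        rw [cNum, if_pos (by have := hcard2 K hK; omega), hinner K hK]
    _ = (S.card : ℤ) + ∑ K ∈ S, ∑ K'' ∈ S.filter (fun K'' => K ⊆ K'' ∧ K ≠ K''),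
          (-1 : ℤ) ^ (K''.card - K.card) := by
        rw [Finset.sum_add_distrib, Finset.sum_const, nsmul_eq_mul, mul_one]
    _ = (S.card : ℤ) + ∑ K'' ∈ S, ∑ K ∈ S.filter (fun K => K ⊆ K'' ∧ K ≠ K''),
          (-1 : ℤ) ^ (K''.card - K.card) := by
        congr 1
        simp only [Finset.sum_filter]
        exact Finset.sum_comm
    _ = (S.card : ℤ) + ∑ K'' ∈ S, ((if K'' = ({i, j} : Finset V) then (1 : ℤ) else 0) - 1) := by
        rw [Finset.sum_congr rfl hD]
    _ = 1 := by
        rw [Finset.sum_sub_distrib, Finset.sum_ite_eq' S ({i, j} : Finset V) (fun _ => (1 : ℤ))]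
        simp [hijS]
end

section
/- Let G be a finite graph, k_max ≥ 2, and suppose the counting numbers satisfy ∑_{R∋x_i} c_R = 1 for each variable node and ∑_{R∋f_a} c_R = 1 for each factor node (validity). Then under clique beliefs parameterized by (φ_1,…,φ_n), the region-based entropy ∑_R c_R H(b_R) equals −∑_{i=1}^n φ_i ln φ_i − ∑_{R} c_R (1−∑_{i: x_i∈V_R} φ_i) ln(1−∑_{i: x_i∈V_R} φ_i). -/
open Finset

/-- The entropy of the clique belief of the region with variable set `S` and throughput
parameters `φ`. -/
noncomputable def regionEntropy {V : Type*} [Fintype V] [DecidableEq V]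
    (S : Finset V) (φ : V → ℝ) : ℝ :=
  -∑ x : {i // i ∈ S} → Bool,
      cliqueBelief (fun i : {i // i ∈ S} => φ i.val) x *
        Real.log (cliqueBelief (fun i : {i // i ∈ S} => φ i.val) x)

def boolEquivFinset (α : Type*) [Fintype α] [DecidableEq α] : (α → Bool) ≃ Finset α where
  toFun x := Finset.univ.filter (fun i => x i = true)
  invFun s := fun i => i ∈ s
  left_inv x := by funext i; simp
  right_inv s := by ext i; simp

lemma key {α : Type*} [Fintype α] [DecidableEq α] (φ : α → ℝ) :
    ∑ x : α → Bool, cliqueBelief φ x * Real.log (cliqueBelief φ x)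
      = (1 - ∑ i, φ i) * Real.log (1 - ∑ i, φ i) + ∑ i : α, φ i * Real.log (φ i) := by
  rw [← Equiv.sum_comp (boolEquivFinset α).symm]
  have hfilt : ∀ s : Finset α,
      Finset.univ.filter (fun i => (boolEquivFinset α).symm s i = true) = s := by
    intro s; ext i; simp [boolEquivFinset]
  have hterm : ∀ s : Finset α,
      cliqueBelief φ ((boolEquivFinset α).symm s) *
        Real.log (cliqueBelief φ ((boolEquivFinset α).symm s))
        = (if s = ∅ then (1 - ∑ i, φ i) * Real.log (1 - ∑ i, φ i) else 0)
          + ∑ i : α, (if s = {i} then φ i * Real.log (φ i) else 0) := by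
    intro s
    unfold cliqueBelief
    rw [hfilt]
    by_cases h0 : s = ∅
    · subst h0
      simp only [if_pos rfl]
      rw [Finset.sum_eq_zero fun i _ => if_neg (fun h => Finset.singleton_ne_empty i h.symm)]
      simp
    · by_cases h1 : s.card = 1
      · obtain ⟨j, rfl⟩ := Finset.card_eq_one.mp h1
        rw [Finset.sum_eq_single j (fun i _ hij => if_neg (by simp [Finset.singleton_inj, Ne.symm hij]))
          (by simp), if_pos rfl]
        simp
      · rw [if_neg (by simpa [Finset.card_eq_zero] using h0), if_neg h1]
        have : ∀ i : α, s ≠ {i} := fun i h => h1 (by simp [h])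
        simp [h0, this]
  rw [Finset.sum_congr rfl (fun s _ => hterm s), Finset.sum_add_distrib]
  congr 1
  · simp
  · rw [Finset.sum_comm]
    apply Finset.sum_congr rfl
    intro i _
    simp

/-- Under clique beliefs, the region-based entropy collapses: given validity of the
counting numbers at each variable node and at each (edge) factor node,
`∑_R c_R H(b_R) = -∑_i φ_i ln φ_i - ∑_R c_R (1-∑_{i∈V_R} φ_i) ln(1-∑_{i∈V_R} φ_i)`. -/
theorem region_entropy_clique_belief {V R : Type*} [Fintype V] [DecidableEq V] [Fintype R]
    (G : SimpleGraph V) [DecidableRel G.Adj] (kmax : ℕ) (hkmax : 2 ≤ kmax)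
    (VR : R → Finset V) (FR : R → Finset (Sym2 V)) (c : R → ℤ)
    (hvarValid : ∀ i : V, ∑ r : R, (if i ∈ VR r then c r else 0) = 1)
    (hfacValid : ∀ e ∈ G.edgeFinset, ∑ r : R, (if e ∈ FR r then c r else 0) = 1)
    (φ : V → ℝ) (hφ : ∀ i, 0 ≤ φ i) (hsum : ∀ r : R, ∑ i ∈ VR r, φ i < 1) :
    ∑ r : R, (c r : ℝ) * regionEntropy (VR r) φ =
      -∑ i, φ i * Real.log (φ i) -
        ∑ r : R, (c r : ℝ) * ((1 - ∑ i ∈ VR r, φ i) * Real.log (1 - ∑ i ∈ VR r, φ i)) := by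
  have hreg : ∀ r : R, regionEntropy (VR r) φ =
      -((1 - ∑ i ∈ VR r, φ i) * Real.log (1 - ∑ i ∈ VR r, φ i)
        + ∑ i ∈ VR r, φ i * Real.log (φ i)) := by
    intro r
    unfold regionEntropy
    rw [key]
    rw [Finset.sum_coe_sort (VR r) φ,
      Finset.sum_coe_sort (VR r) (fun i => φ i * Real.log (φ i))]
  have hcollapse : ∑ r : R, (c r : ℝ) * ∑ i ∈ VR r, φ i * Real.log (φ i)
      = ∑ i, φ i * Real.log (φ i) := by
    have h1 : ∀ r : R, (c r : ℝ) * ∑ i ∈ VR r, φ i * Real.log (φ i)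
        = ∑ i : V, (if i ∈ VR r then (c r : ℝ) else 0) * (φ i * Real.log (φ i)) := by
      intro r
      symm
      calc ∑ i : V, (if i ∈ VR r then (c r : ℝ) else 0) * (φ i * Real.log (φ i))
          = ∑ i : V, (if i ∈ VR r then (c r : ℝ) * (φ i * Real.log (φ i)) else 0) :=
            Finset.sum_congr rfl fun i _ => by rw [ite_mul, zero_mul]
        _ = ∑ i ∈ VR r, (c r : ℝ) * (φ i * Real.log (φ i)) := by
            rw [Finset.sum_ite_mem, Finset.univ_inter]
        _ = (c r : ℝ) * ∑ i ∈ VR r, φ i * Real.log (φ i) := (Finset.mul_sum _ _ _).symm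
    rw [Finset.sum_congr rfl (fun r _ => h1 r), Finset.sum_comm]
    apply Finset.sum_congr rfl
    intro i _
    rw [← Finset.sum_mul]
    have : ∑ r : R, (if i ∈ VR r then (c r : ℝ) else 0) = 1 := by
      have h : ((∑ r : R, if i ∈ VR r then c r else 0 : ℤ) : ℝ) = 1 := by
        rw [hvarValid i]; norm_num
      rw [← h]
      push_cast
      rfl
    rw [this, one_mul]
  calc ∑ r : R, (c r : ℝ) * regionEntropy (VR r) φ
      = ∑ r : R, (-((c r : ℝ) * ∑ i ∈ VR r, φ i * Real.log (φ i))
          - (c r : ℝ) * ((1 - ∑ i ∈ VR r, φ i) * Real.log (1 - ∑ i ∈ VR r, φ i))) := by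
        apply Finset.sum_congr rfl
        intro r _
        rw [hreg r]; ring
    _ = _ := by
        rw [Finset.sum_sub_distrib, Finset.sum_neg_distrib, hcollapse]
end
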